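/- Let Φ = Π.φ be a QCNF, C ∈ φ a clause, and l ∈ C an existential literal that is blocked in C; let x = vars(l) and let W = { k∈C : k≠l and there exists D∈φ with k̄,l̄∈D and k<l } be the set of witnesses for l being blocked. Let M′ be a model of Φ′ = Π.(φ∖{C}) with definition ψ′_x for x. Define ψ_x = ψ′_x ∨ M′(⋀_{k∈W} k̄) if l = x, and ψ_x = ψ′_x ∧ M′(⋁_{k∈W} k) if l = x̄; let M = (M′∖{ψ′_x}) ∪ {ψ_x}. Then M is a model of Φ. -/

import Mathlib

/-!
Framework for prenex QCNF: variables are natural numbers; a quantifier prefix is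
given by `ex : Var → Bool` (`ex v = true` iff variable `v` is existential), and
the prefix order on variables (hence on literals) is `<` on ℕ.
-/

abbrev Var := ℕ

/-- A literal: a variable together with a polarity (`pos = true` for `x`, `false` for `x̄`). -/
structure Lit where
  var : Var
  pos : Bool
deriving DecidableEq

/-- The complementary literal. -/
def Lit.neg (l : Lit) : Lit := ⟨l.var, !l.pos⟩

/-- Clauses (disjunctions) and terms (conjunctions) are finite sets of literals. -/
abbrev Clause := Finset Lit
abbrev Term := Finset Lit

/-- A set of literals contains no complementary pair. -/
def LitSetOk (C : Finset Lit) : Prop := ∀ l ∈ C, l.neg ∉ C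

instance (C : Finset Lit) : Decidable (LitSetOk C) :=
  inferInstanceAs (Decidable (∀ l ∈ C, l.neg ∉ C))

/-- The resOf on pivot literal `p` (used both for clauses and for terms). -/
def resOf (p : Lit) (A B : Finset Lit) : Finset Lit := A.erase p ∪ B.erase p.neg

/-- Resolution of `A` (containing `p`) with `B` (containing `p.neg`) is defined: the
union of the side literals contains no complementary pair and neither `p` nor `p.neg`. -/
def ResOk (p : Lit) (A B : Finset Lit) : Prop :=
  p ∈ A ∧ p.neg ∈ B ∧ p ∉ resOf p A B ∧ p.neg ∉ resOf p A B ∧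
    LitSetOk (resOf p A B)

instance (p : Lit) (A B : Finset Lit) : Decidable (ResOk p A B) :=
  inferInstanceAs (Decidable (p ∈ A ∧ p.neg ∈ B ∧ p ∉ resOf p A B ∧
    p.neg ∉ resOf p A B ∧ LitSetOk (resOf p A B)))

/-- ∀-reduction: `C'` results from `C` by removing every universal literal `l` such
that no existential literal `k ∈ C` satisfies `l < k`. -/
def IsForallReduct (ex : Var → Bool) (C C' : Clause) : Prop :=
  ∀ l : Lit, l ∈ C' ↔ l ∈ C ∧ (ex l.var = true ∨ ∃ k ∈ C, ex k.var = true ∧ l.var < k.var)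

/-- QU-resolution proofs of a clause from the matrix `φ` under the prefix `ex`:
every clause is in `φ`, or a QU-resOf of two earlier clauses (the pivot may be
universal), or results from an earlier clause by ∀-reduction. -/
inductive QUProof (ex : Var → Bool) (φ : Finset Clause) : Clause → Prop
  | ax {C : Clause} : C ∈ φ → QUProof ex φ C
  | res {A B : Clause} {p : Lit} : QUProof ex φ A → QUProof ex φ B → ResOk p A B →
      QUProof ex φ (resOf p A B)
  | red {C C' : Clause} : QUProof ex φ C → IsForallReduct ex C C' → QUProof ex φ C'

/-- ∃-reduction: `T'` results from `T` by removing every existential literal `l` such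
that no universal literal `k ∈ T` satisfies `l < k`. -/
def IsExistsReduct (ex : Var → Bool) (T T' : Term) : Prop :=
  ∀ l : Lit, l ∈ T' ↔ l ∈ T ∧ (ex l.var = false ∨ ∃ k ∈ T, ex k.var = false ∧ l.var < k.var)

/-- Model generation rule: `T` is generated from the matrix `φ` if every clause of `φ`
contains a literal belonging to `T`. -/
def ModelGen (φ : Finset Clause) (T : Term) : Prop := ∀ C ∈ φ, ∃ l ∈ C, l ∈ T

/-- `π` is a term-resolution proof of the term `T` from the QCNF with prefix `ex` and
matrix `φ`: a finite sequence of terms ending in `T`, each generated by model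
generation or obtained from earlier terms by ∃-reduction or term-resolution. -/
def IsTermResProof (ex : Var → Bool) (φ : Finset Clause) (π : List Term) (T : Term) : Prop :=
  π ≠ [] ∧ π.getLast? = some T ∧
    ∀ i : Fin π.length, LitSetOk (π.get i) ∧
      (ModelGen φ (π.get i) ∨
        (∃ j : Fin π.length, j < i ∧ IsExistsReduct ex (π.get j) (π.get i)) ∨
        (∃ j k : Fin π.length, j < i ∧ k < i ∧ ∃ p : Lit,
          ResOk p (π.get j) (π.get k) ∧ π.get i = resOf p (π.get j) (π.get k)))

/-- Value of a literal under a total assignment. -/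
def evalLit (σ : Var → Bool) (l : Lit) : Bool := if l.pos then σ l.var else !σ l.var

/-- A strategy assigns to each (existential) variable a Boolean function of the
universal assignment — the semantic counterpart of a propositional formula. -/
abbrev Strategy := Var → (Var → Bool) → Bool

/-- The total assignment induced by a strategy `M` and a universal assignment `τ`. -/
def Strategy.assign (ex : Var → Bool) (M : Strategy) (τ : Var → Bool) : Var → Bool :=
  fun v => if ex v then M v τ else τ v

/-- The definition of each existential variable depends only on the universal
variables preceding it in the prefix. -/
def WellFormed (ex : Var → Bool) (M : Strategy) : Prop :=
  ∀ e, ex e = true → ∀ τ τ' : Var → Bool,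
    (∀ u, ex u = false → u < e → τ u = τ' u) → M e τ = M e τ'

/-- `M` is a model of the QCNF with prefix `ex` and matrix `φ`: it is a well-formed
strategy and `M(φ)` is a tautology. -/
def IsModel (ex : Var → Bool) (φ : Finset Clause) (M : Strategy) : Prop :=
  WellFormed ex M ∧
    ∀ τ : Var → Bool, ∀ C ∈ φ, ∃ l ∈ C, evalLit (Strategy.assign ex M τ) l = true

/-- A term `T` agrees with an assignment `τ` to the universal variables iff there is
no (universal) literal `l` with `l̄ ∈ T` and `τ(l) = 1`. -/
def Agrees (ex : Var → Bool) (τ : Var → Bool) (T : Term) : Prop :=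
  ¬∃ l : Lit, ex l.var = false ∧ l.neg ∈ T ∧ evalLit τ l = true

/-- Edge `a → b` of the binary implication graph of `φ`: the binary clause
`a.neg ∨ b` is in `φ` (a clause `l₁ ∨ l₂` yields the edges `l̄₁ → l₂`, `l̄₂ → l₁`). -/
def ImpEdge (φ : Finset Clause) (a b : Lit) : Prop :=
  a ≠ b ∧ a.neg ≠ b ∧ ({a.neg, b} : Clause) ∈ φ

/-- The existential literal `l` of the clause `C` is blocked in the matrix `φ`. -/
def BlockedIn (ex : Var → Bool) (φ : Finset Clause) (C : Clause) (l : Lit) : Prop :=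
  ex l.var = true ∧ l ∈ C ∧ ∀ D ∈ φ, l.neg ∈ D → ∃ k ∈ C, k.var < l.var ∧ k.neg ∈ D

/-- One step of blocked clause elimination: remove one blocked clause. -/
def BCEStep (ex : Var → Bool) (φ φ' : Finset Clause) : Prop :=
  ∃ C ∈ φ, (∃ l, BlockedIn ex φ C l) ∧ φ' = φ.erase C

/-- The side-condition for eliminating the existential variable `x` from the matrix `φ`. -/
def VEside (x : Var) (φ : Finset Clause) : Prop :=
  ∀ C ∈ φ, (⟨x, true⟩ : Lit) ∈ C → (∃ k ∈ C, x < k.var) →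
    ∀ D ∈ φ, (⟨x, false⟩ : Lit) ∈ D → ∃ z ∈ C, z.var < x ∧ z.neg ∈ D

/-- The set of all defined resolvents on `x` between the clauses of `φ` containing the
literal `x` and those containing `x̄`. -/
def VEresolvents (x : Var) (φ : Finset Clause) : Finset Clause :=
  ((φ ×ˢ φ).filter fun q => ResOk ⟨x, true⟩ q.1 q.2).image
    fun q => resOf ⟨x, true⟩ q.1 q.2

/-- Variable elimination of `x`: replace all clauses mentioning `x` by all defined
resolvents on `x`. -/
def VEapply (x : Var) (φ : Finset Clause) : Finset Clause :=
  φ.filter (fun C => (⟨x, true⟩ : Lit) ∉ C ∧ (⟨x, false⟩ : Lit) ∉ C) ∪ VEresolvents x φ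

/-- The variables of Φₙ (0-indexed): `uᵢ` is variable `2*i`, `eᵢ` is variable `2*i+1`,
so the prefix `∀u₀∃e₀…∀u_{n-1}∃e_{n-1}` is the natural order. -/
def uLit (i : ℕ) (b : Bool) : Lit := ⟨2 * i, b⟩
def eLit (i : ℕ) (b : Bool) : Lit := ⟨2 * i + 1, b⟩

/-- The prefix of Φₙ: even variables universal, odd variables existential. -/
def phiEx : Var → Bool := fun v => v % 2 == 1

/-- The clause `ūᵢ ∨ eᵢ`. -/
def posClause (i : ℕ) : Clause := {uLit i false, eLit i true}
/-- The clause `uᵢ ∨ ēᵢ`. -/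
def negClause (i : ℕ) : Clause := {uLit i true, eLit i false}

/-- The matrix of Φₙ: `⋀_{i<n} (ūᵢ ∨ eᵢ) ∧ (uᵢ ∨ ēᵢ)`. -/
def PhiMatrix (n : ℕ) : Finset Clause :=
  (Finset.range n).biUnion fun i => {posClause i, negClause i}

/-- The set `W` of witnesses for the literal `l` being blocked in the clause `C`. -/
def witnesses (φ : Finset Clause) (C : Clause) (l : Lit) : Finset Lit :=
  C.filter fun k => k ≠ l ∧ k.var < l.var ∧ ∃ D ∈ φ, k.neg ∈ D ∧ l.neg ∈ D

/-- `φ` with all literals not less than `x` deleted from each clause. -/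
def restrictBelow (x : Var) (φ : Finset Clause) : Finset Clause :=
  φ.image fun C => C.filter fun l => l.var < x

/-! The repaired strategy changes only the value of `x = vars(l)`, and only in the
direction that makes `l` true, and it does so exactly when `M'` falsifies every witness.
Hence `C` becomes satisfied (by `l`, or else by a true witness), and a clause `D` that
`M'` satisfied only through `l̄` contains the complement `k̄` of a witness `k`, which is then
true. The witnesses precede `x`, so the new definition of `x` still depends only on
universal variables preceding `x`. -/

lemma evalLit_neg (σ : Var → Bool) (k : Lit) : evalLit σ k.neg = !evalLit σ k := by
  rcases k with ⟨v, b⟩; cases b <;> simp [evalLit, Lit.neg]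

lemma evalLit_congr {σ σ' : Var → Bool} {k : Lit} (h : σ k.var = σ' k.var) :
    evalLit σ k = evalLit σ' k := by
  simp [evalLit, h]

lemma Lit.eq_or_eq_neg_of_var_eq {k l : Lit} (h : k.var = l.var) : k = l ∨ k = l.neg := by
  rcases k with ⟨v, b⟩; rcases l with ⟨w, c⟩
  cases b <;> cases c <;> simp_all [Lit.neg]

namespace Strategy

variable {ex : Var → Bool}

lemma assign_update_of_ne (M : Strategy) {x v : Var} (g : (Var → Bool) → Bool)
    (τ : Var → Bool) (hv : v ≠ x) :
    assign ex (Function.update M x g) τ v = assign ex M τ v := by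
  simp [assign, Function.update_of_ne hv]

lemma assign_update_self (M : Strategy) {x : Var} (g : (Var → Bool) → Bool)
    (τ : Var → Bool) (hx : ex x = true) :
    assign ex (Function.update M x g) τ x = g τ := by
  simp [assign, hx]

end Strategy

/-- The strategy `M` with the definition of `vars(l)` repaired along the literals `W`:
`ψ_x ∨ M(⋀_{k∈W} k̄)` if `l = x`, and `ψ_x ∧ M(⋁_{k∈W} k)` if `l = x̄`. -/
def repairedStrategy (ex : Var → Bool) (M : Strategy) (l : Lit) (W : Finset Lit) : Strategy :=
  Function.update M l.var fun τ =>
    if l.pos then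
      M l.var τ || decide (∀ k ∈ W, evalLit (Strategy.assign ex M τ) k.neg = true)
    else
      M l.var τ && decide (∃ k ∈ W, evalLit (Strategy.assign ex M τ) k = true)

section Repair

variable {ex : Var → Bool} {M : Strategy} {l : Lit} {W : Finset Lit}

lemma WellFormed.assign_eq_of_lt (hM : WellFormed ex M) {τ τ' : Var → Bool} {x : Var}
    (hτ : ∀ u, ex u = false → u < x → τ u = τ' u) {v : Var} (hv : v < x) :
    Strategy.assign ex M τ v = Strategy.assign ex M τ' v := by
  unfold Strategy.assign
  cases hev : ex v
  · exact hτ v hev hv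
  · exact hM v hev τ τ' fun u hu huv => hτ u hu (huv.trans hv)

lemma WellFormed.update (hM : WellFormed ex M) {x : Var} {g : (Var → Bool) → Bool}
    (hg : ∀ τ τ', (∀ u, ex u = false → u < x → τ u = τ' u) → g τ = g τ') :
    WellFormed ex (Function.update M x g) := by
  intro e he τ τ' hτ
  by_cases hex : e = x
  · subst hex
    simpa using hg τ τ' hτ
  · simpa [Function.update_of_ne hex] using hM e he τ τ' hτ

lemma WellFormed.repairedStrategy (hM : WellFormed ex M) (hex : ex l.var = true)
    (hW : ∀ k ∈ W, k.var < l.var) : WellFormed ex (repairedStrategy ex M l W) := by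
  refine hM.update fun τ τ' hτ => ?_
  have hx : M l.var τ = M l.var τ' := hM l.var hex τ τ' hτ
  have hk : ∀ k ∈ W, evalLit (Strategy.assign ex M τ) k = evalLit (Strategy.assign ex M τ') k :=
    fun k hk => evalLit_congr (hM.assign_eq_of_lt hτ (hW k hk))
  have hany : (∃ k ∈ W, evalLit (Strategy.assign ex M τ) k = true) ↔
      ∃ k ∈ W, evalLit (Strategy.assign ex M τ') k = true :=
    exists_congr fun k => and_congr_right fun hkW => by rw [hk k hkW]
  simp +contextual only [evalLit_neg, hx, hk, hany]

lemma evalLit_assign_repairedStrategy (hex : ex l.var = true) (τ : Var → Bool) :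
    evalLit (Strategy.assign ex (repairedStrategy ex M l W) τ) l = true ↔
      evalLit (Strategy.assign ex M τ) l = true ∨
        ∀ k ∈ W, evalLit (Strategy.assign ex M τ) k = false := by
  rw [evalLit, evalLit, repairedStrategy, Strategy.assign_update_self _ _ _ hex]
  have hM : Strategy.assign ex M τ l.var = M l.var τ := by simp [Strategy.assign, hex]
  cases l.pos <;> simp [hM, evalLit_neg]

lemma evalLit_assign_repairedStrategy_of_var_ne {k : Lit} (hk : k.var ≠ l.var) (τ : Var → Bool) :
    evalLit (Strategy.assign ex (repairedStrategy ex M l W) τ) k =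
      evalLit (Strategy.assign ex M τ) k :=
  evalLit_congr (Strategy.assign_update_of_ne _ _ _ hk)

lemma exists_evalLit_repairedStrategy_of_mem {C : Clause} (hex : ex l.var = true)
    (hl : l ∈ C) (hWC : W ⊆ C) (hW : ∀ k ∈ W, k.var < l.var) (τ : Var → Bool) :
    ∃ k ∈ C, evalLit (Strategy.assign ex (repairedStrategy ex M l W) τ) k = true := by
  by_cases hlτ : evalLit (Strategy.assign ex (repairedStrategy ex M l W) τ) l = true
  · exact ⟨l, hl, hlτ⟩
  obtain ⟨k, hkW, hkτ⟩ : ∃ k ∈ W, evalLit (Strategy.assign ex M τ) k = true := by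
    simp only [evalLit_assign_repairedStrategy hex, not_or, not_forall] at hlτ
    simpa using hlτ.2
  refine ⟨k, hWC hkW, ?_⟩
  rwa [evalLit_assign_repairedStrategy_of_var_ne (hW k hkW).ne]

lemma exists_evalLit_repairedStrategy_of_exists {D : Clause} (hex : ex l.var = true)
    (hW : ∀ k ∈ W, k.var < l.var) (hD : l.neg ∈ D → ∃ k ∈ W, k.neg ∈ D) (τ : Var → Bool)
    (hsat : ∃ m ∈ D, evalLit (Strategy.assign ex M τ) m = true) :
    ∃ m ∈ D, evalLit (Strategy.assign ex (repairedStrategy ex M l W) τ) m = true := by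
  obtain ⟨m, hmD, hmτ⟩ := hsat
  by_cases hm : m.var = l.var
  swap
  · exact ⟨m, hmD, by rwa [evalLit_assign_repairedStrategy_of_var_ne hm]⟩
  rcases Lit.eq_or_eq_neg_of_var_eq hm with rfl | rfl
  · exact ⟨m, hmD, (evalLit_assign_repairedStrategy hex τ).2 (Or.inl hmτ)⟩
  by_cases hnτ : evalLit (Strategy.assign ex (repairedStrategy ex M l W) τ) l.neg = true
  · exact ⟨l.neg, hmD, hnτ⟩
  -- `x` was flipped, which happens only when `M` falsifies every literal of `W`
  have hall : ∀ k ∈ W, evalLit (Strategy.assign ex M τ) k = false :=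
    ((evalLit_assign_repairedStrategy hex τ).1 (by simpa [evalLit_neg] using hnτ)).resolve_left
      (by simpa [evalLit_neg] using hmτ)
  obtain ⟨k, hkW, hkD⟩ := hD hmD
  refine ⟨k.neg, hkD, ?_⟩
  rw [evalLit_assign_repairedStrategy_of_var_ne (k := k.neg) (hW k hkW).ne, evalLit_neg,
    hall k hkW, Bool.not_false]

end Repair

lemma witnesses_subset (φ : Finset Clause) (C : Clause) (l : Lit) : witnesses φ C l ⊆ C :=
  Finset.filter_subset _ _

lemma var_lt_of_mem_witnesses {φ : Finset Clause} {C : Clause} {l k : Lit}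
    (hk : k ∈ witnesses φ C l) : k.var < l.var :=
  (Finset.mem_filter.1 hk).2.2.1

lemma exists_mem_witnesses_neg_mem {φ : Finset Clause} {C : Clause} {l : Lit}
    (hblocked : ∀ D ∈ φ, l.neg ∈ D → ∃ k ∈ C, k.var < l.var ∧ k.neg ∈ D)
    {D : Clause} (hD : D ∈ φ) (hlD : l.neg ∈ D) : ∃ k ∈ witnesses φ C l, k.neg ∈ D := by
  obtain ⟨k, hkC, hkl, hkD⟩ := hblocked D hD hlD
  exact ⟨k, Finset.mem_filter.2 ⟨hkC, fun h => hkl.ne (congrArg Lit.var h), hkl, D, hD, hkD, hlD⟩,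
    hkD⟩

theorem stmt11_general (ex : Var → Bool) (φ : Finset Clause)
    (C : Clause) (l : Lit) (hl : l ∈ C) (hex : ex l.var = true)
    (hblocked : ∀ D ∈ φ, l.neg ∈ D → ∃ k ∈ C, k.var < l.var ∧ k.neg ∈ D)
    (M' : Strategy) (hM' : IsModel ex (φ.erase C) M') :
    IsModel ex φ
      (Function.update M' l.var fun τ =>
        if l.pos then
          M' l.var τ ||
            decide (∀ k ∈ witnesses φ C l, evalLit (Strategy.assign ex M' τ) k.neg = true)
        else
          M' l.var τ &&
            decide (∃ k ∈ witnesses φ C l, evalLit (Strategy.assign ex M' τ) k = true)) := by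
  change IsModel ex φ (repairedStrategy ex M' l (witnesses φ C l))
  have hW : ∀ k ∈ witnesses φ C l, k.var < l.var := fun _ => var_lt_of_mem_witnesses
  refine ⟨hM'.1.repairedStrategy hex hW, fun τ D hD => ?_⟩
  by_cases hDC : D = C
  · subst hDC
    exact exists_evalLit_repairedStrategy_of_mem hex hl (witnesses_subset φ D l) hW τ
  · exact exists_evalLit_repairedStrategy_of_exists hex hW
      (exists_mem_witnesses_neg_mem hblocked hD) τ (hM'.2 τ D (Finset.mem_erase.2 ⟨hDC, hD⟩))

theorem stmt11 (ex : Var → Bool) (φ : Finset Clause) (hok : ∀ E ∈ φ, LitSetOk E)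
    (C : Clause) (hC : C ∈ φ) (l : Lit) (hl : l ∈ C) (hex : ex l.var = true)
    (hblocked : ∀ D ∈ φ, l.neg ∈ D → ∃ k ∈ C, k.var < l.var ∧ k.neg ∈ D)
    (M' : Strategy) (hM' : IsModel ex (φ.erase C) M') :
    IsModel ex φ
      (Function.update M' l.var fun τ =>
        if l.pos then
          M' l.var τ ||
            decide (∀ k ∈ witnesses φ C l, evalLit (Strategy.assign ex M' τ) k.neg = true)
        else
          M' l.var τ &&
            decide (∃ k ∈ witnesses φ C l, evalLit (Strategy.assign ex M' τ) k = true)) :=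
  stmt11_general ex φ C l hl hex hblocked M' hM'
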